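/- (Universal exponential consistency in Theorem 2.) Fix M ≥ 3 and full-support probability distributions μ ≠ π on 𝒴. Then V*(M) > 0, where V*(M) is the minimum of D(q_1‖μ) + D(q_2‖π) + … + D(q_M‖π) over all M-tuples of probability distributions (q_1,…,q_M) on 𝒴 satisfying Σ_{j≠1} D( q_j ‖ (Σ_{k≠1} q_k)/(M−1) ) ≥ Σ_{j≠2} D( q_j ‖ (Σ_{k≠2} q_k)/(M−1) ). -/

import Mathlib

open Filter Finset Topology

noncomputable section

/-- `p` is a probability distribution on the finite alphabet. -/
def IsProb {𝓨 : Type} [Fintype 𝓨] (p : 𝓨 → ℝ) : Prop :=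
  (∀ y, 0 ≤ p y) ∧ ∑ y, p y = 1

/-- `p` has full support. -/
def FullSupport {𝓨 : Type} (p : 𝓨 → ℝ) : Prop := ∀ y, 0 < p y

/-- Relative entropy `D(q‖p)` (natural log, convention `0·log 0 = 0`,
which holds since `Real.log 0 = 0` in Mathlib). -/
def KL {𝓨 : Type} [Fintype 𝓨] (q p : 𝓨 → ℝ) : ℝ :=
  ∑ y, q y * Real.log (q y / p y)

/-- The feasible values of the optimization problem in Theorem 2: tuples
`(q_1, …, q_M)` of distributions (indexed here by `0, …, M-1`) satisfying
`∑_{j≠1} D(q_j ‖ (∑_{k≠1} q_k)/(M-1)) ≥ ∑_{j≠2} D(q_j ‖ (∑_{k≠2} q_k)/(M-1))`,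
with objective `D(q_1‖μ) + D(q_2‖π) + … + D(q_M‖π)`. -/
def VstarSet {𝓨 : Type} [Fintype 𝓨] (μ π : 𝓨 → ℝ) (M : ℕ) : Set ℝ :=
  {x | ∃ q : ℕ → 𝓨 → ℝ, (∀ j < M, IsProb (q j)) ∧
    (∑ j ∈ Finset.range M \ {0}, KL (q j)
        (fun a => (∑ k ∈ Finset.range M \ {0}, q k a) / ((M : ℝ) - 1)) ≥
     ∑ j ∈ Finset.range M \ {1}, KL (q j)
        (fun a => (∑ k ∈ Finset.range M \ {1}, q k a) / ((M : ℝ) - 1))) ∧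
    x = KL (q 0) μ + ∑ j ∈ Finset.range M \ {0}, KL (q j) π}

/-! Both the objective and the constraint are continuous on tuples of distributions (the
constraint after rewriting it through `x log x`, which also covers mixtures with zero entries),
and the feasible set is compact, so the minimum is attained. By Gibbs' inequality the objective
vanishes only at `q = (μ, π, …, π)`. There the left side of the constraint is `0`, while its
right side is the divergence of `μ, π, …, π` from their mixture; since `M ≥ 3` this family
contains both `μ` and `π`, so the divergence is positive and the constraint fails. -/

open InformationTheory
open Real (log log_div log_mul)

section KL

variable {𝓨 : Type} [Fintype 𝓨]

lemma mul_log_div_eq_sub (q : ℝ) {p : ℝ} (hp : p ≠ 0) :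
    q * log (q / p) = q * log q - q * log p := by
  rcases eq_or_ne q 0 with rfl | hq
  · simp
  · rw [log_div hq hp]; ring

lemma continuous_KL_left {p : 𝓨 → ℝ} (hp : ∀ y, p y ≠ 0) :
    Continuous fun q : 𝓨 → ℝ => KL q p := by
  have h : (fun q : 𝓨 → ℝ => KL q p) = fun q => ∑ y, (q y * log (q y) - q y * log (p y)) :=
    funext fun q => sum_congr rfl fun y _ => mul_log_div_eq_sub (q y) (hp y)
  rw [h]
  fun_prop

lemma KL_self (p : 𝓨 → ℝ) : KL p p = 0 := by
  simp [KL]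

lemma mul_log_div_sub_sub_eq_mul_klFun (q : ℝ) {p : ℝ} (hp : p ≠ 0) :
    q * log (q / p) - (q - p) = p * klFun (q / p) := by
  unfold klFun
  field_simp
  ring

lemma KL_eq_sum_mul_klFun {q p : 𝓨 → ℝ} (hsum : ∑ y, q y = ∑ y, p y) (hp : ∀ y, p y ≠ 0) :
    KL q p = ∑ y, p y * klFun (q y / p y) := by
  have h : ∑ y, (q y - p y) = 0 := by rw [sum_sub_distrib, hsum, sub_self]
  rw [KL, ← sub_zero (∑ y, _), ← h, ← sum_sub_distrib]
  exact sum_congr rfl fun y _ => mul_log_div_sub_sub_eq_mul_klFun (q y) (hp y)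

lemma KL_nonneg {q p : 𝓨 → ℝ} (hq : IsProb q) (hp : IsProb p) (hpf : FullSupport p) :
    0 ≤ KL q p := by
  rw [KL_eq_sum_mul_klFun (hq.2.trans hp.2.symm) fun y => (hpf y).ne']
  exact sum_nonneg fun y _ =>
    mul_nonneg (hp.1 y) (klFun_nonneg (div_nonneg (hq.1 y) (hp.1 y)))

lemma eq_of_KL_eq_zero {q p : 𝓨 → ℝ} (hq : IsProb q) (hp : IsProb p) (hpf : FullSupport p)
    (h : KL q p = 0) : q = p := by
  rw [KL_eq_sum_mul_klFun (hq.2.trans hp.2.symm) fun y => (hpf y).ne'] at h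
  funext y
  have hy := (sum_eq_zero_iff_of_nonneg fun y _ =>
    mul_nonneg (hp.1 y) (klFun_nonneg (div_nonneg (hq.1 y) (hp.1 y)))).1 h y (mem_univ y)
  rwa [mul_eq_zero, or_iff_right (hpf y).ne', klFun_eq_zero_iff (div_nonneg (hq.1 y) (hp.1 y)),
    div_eq_one_iff_eq (hpf y).ne'] at hy

end KL

section Mixture

variable {𝓨 : Type} {ι : Type*}

def mixture (A : Finset ι) (q : ι → 𝓨 → ℝ) (y : 𝓨) : ℝ :=
  (∑ k ∈ A, q k y) / #A

lemma mixture_of_forall_eq {A : Finset ι} {q : ι → 𝓨 → ℝ} {p : 𝓨 → ℝ} (hA : A.Nonempty)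
    (h : ∀ j ∈ A, q j = p) : mixture A q = p := by
  funext y
  rw [mixture, sum_congr rfl fun j hj => congrFun (h j hj) y, sum_const, nsmul_eq_mul,
    mul_div_cancel_left₀ _ (Nat.cast_ne_zero.2 hA.card_pos.ne')]

lemma fullSupport_mixture {A : Finset ι} {q : ι → 𝓨 → ℝ} {i : ι} (hq : ∀ j ∈ A, ∀ y, 0 ≤ q j y)
    (hi : i ∈ A) (hfull : FullSupport (q i)) : FullSupport (mixture A q) := fun y =>
  div_pos ((hfull y).trans_le (single_le_sum (fun k hk => hq k hk y) hi))
    (Nat.cast_pos.2 (card_pos.2 ⟨i, hi⟩))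

variable [Fintype 𝓨] {A : Finset ι} {q : ι → 𝓨 → ℝ}

lemma isProb_mixture (hA : A.Nonempty) (hq : ∀ j ∈ A, IsProb (q j)) : IsProb (mixture A q) := by
  refine ⟨fun y => div_nonneg (sum_nonneg fun j hj => (hq j hj).1 y) (Nat.cast_nonneg _), ?_⟩
  simp only [mixture]
  rw [← sum_div, sum_comm, sum_congr rfl fun j hj => (hq j hj).2, sum_const,
    nsmul_one, div_self (Nat.cast_ne_zero.2 hA.card_pos.ne')]

def divToMixture (A : Finset ι) (q : ι → 𝓨 → ℝ) : ℝ :=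
  ∑ j ∈ A, KL (q j) (mixture A q)

lemma divToMixture_congr {q' : ι → 𝓨 → ℝ} (h : ∀ j ∈ A, q j = q' j) :
    divToMixture A q = divToMixture A q' := by
  have hmix : mixture A q = mixture A q' := by
    funext y
    rw [mixture, mixture, sum_congr rfl fun j hj => congrFun (h j hj) y]
  rw [divToMixture, divToMixture, hmix]
  exact sum_congr rfl fun j hj => by rw [h j hj]

lemma divToMixture_of_forall_eq {p : 𝓨 → ℝ} (h : ∀ j ∈ A, q j = p) : divToMixture A q = 0 := by
  rcases A.eq_empty_or_nonempty with rfl | hA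
  · simp [divToMixture]
  · rw [divToMixture, mixture_of_forall_eq hA h]
    exact sum_eq_zero fun j hj => by rw [h j hj, KL_self]

lemma divToMixture_pos {i j k : ι} (hq : ∀ l ∈ A, IsProb (q l)) (hi : i ∈ A)
    (hfull : FullSupport (q i)) (hj : j ∈ A) (hk : k ∈ A) (hjk : q j ≠ q k) :
    0 < divToMixture A q := by
  have hρ : IsProb (mixture A q) := isProb_mixture ⟨i, hi⟩ hq
  have hρf : FullSupport (mixture A q) := fullSupport_mixture (fun l hl => (hq l hl).1) hi hfull
  have hnn : ∀ l ∈ A, 0 ≤ KL (q l) (mixture A q) := fun l hl => KL_nonneg (hq l hl) hρ hρf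
  refine (sum_nonneg hnn).lt_of_ne fun h => hjk ?_
  have hzero := (sum_eq_zero_iff_of_nonneg hnn).1 h.symm
  rw [eq_of_KL_eq_zero (hq j hj) hρ hρf (hzero j hj),
    eq_of_KL_eq_zero (hq k hk) hρ hρf (hzero k hk)]

lemma divToMixture_eq_sum_mul_log (hq : ∀ j ∈ A, ∀ y, 0 ≤ q j y) :
    divToMixture A q = ∑ y, (∑ j ∈ A, q j y * log (q j y)
      - (∑ j ∈ A, q j y) * log (∑ j ∈ A, q j y) + (∑ j ∈ A, q j y) * log #A) := by
  simp only [divToMixture, KL]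
  rw [sum_comm]
  refine sum_congr rfl fun y _ => ?_
  have hterm : ∀ j ∈ A, q j y * log (q j y / mixture A q y) = q j y * log (q j y)
      - q j y * log (∑ k ∈ A, q k y) + q j y * log #A := by
    intro j hj
    rcases (hq j hj y).eq_or_lt with h | h
    · simp [← h]
    · have hS : 0 < ∑ k ∈ A, q k y := h.trans_le (single_le_sum (fun k hk => hq k hk y) hj)
      have hA : (0 : ℝ) < #A := Nat.cast_pos.2 (card_pos.2 ⟨j, hj⟩)
      rw [mixture, div_div_eq_mul_div, log_div (by positivity) hS.ne', log_mul h.ne' hA.ne']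
      ring
  rw [sum_congr rfl hterm, sum_add_distrib, sum_sub_distrib, ← sum_mul, ← sum_mul]

lemma continuousOn_divToMixture (A : Finset ι) :
    ContinuousOn (divToMixture (𝓨 := 𝓨) A) {q | ∀ j ∈ A, ∀ y, 0 ≤ q j y} := by
  refine ContinuousOn.congr (Continuous.continuousOn ?_) fun q hq => divToMixture_eq_sum_mul_log hq
  fun_prop

end Mixture

section Vstar

variable {𝓨 : Type} [Fintype 𝓨] {M : ℕ} {μ π : 𝓨 → ℝ}

def objective (μ π : 𝓨 → ℝ) (M : ℕ) (q : ℕ → 𝓨 → ℝ) : ℝ :=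
  KL (q 0) μ + ∑ j ∈ range M \ {0}, KL (q j) π

lemma continuous_objective (hμ : ∀ y, μ y ≠ 0) (hπ : ∀ y, π y ≠ 0) :
    Continuous (objective μ π M) :=
  ((continuous_KL_left hμ).comp (continuous_apply 0)).add
    (continuous_finsetSum _ fun j _ => (continuous_KL_left hπ).comp (continuous_apply j))

lemma card_range_sdiff_singleton {i : ℕ} (hi : i < M) : ((#(range M \ {i}) : ℕ) : ℝ) = M - 1 := by
  rw [card_sdiff_of_subset (singleton_subset_iff.2 (mem_range.2 hi)), card_range, card_singleton,
    Nat.cast_sub (by omega), Nat.cast_one]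

lemma mem_VstarSet_iff (hM : 2 ≤ M) {x : ℝ} :
    x ∈ VstarSet μ π M ↔ ∃ q : ℕ → 𝓨 → ℝ, (∀ j < M, IsProb (q j)) ∧
      divToMixture (range M \ {1}) q ≤ divToMixture (range M \ {0}) q ∧
      x = objective μ π M q := by
  have hmix : ∀ i < M, (mixture (range M \ {i}) : (ℕ → 𝓨 → ℝ) → 𝓨 → ℝ) =
      fun q y => (∑ k ∈ range M \ {i}, q k y) / ((M : ℝ) - 1) := fun i hi => by
    funext q y
    rw [mixture, card_range_sdiff_singleton hi]
  simp only [divToMixture, hmix 0 (by omega), hmix 1 (by omega)]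
  rfl

def feasibleSet (𝓨 : Type) [Fintype 𝓨] (M : ℕ) : Set (ℕ → 𝓨 → ℝ) :=
  {q ∈ Set.univ.pi fun _ => stdSimplex ℝ 𝓨 |
    divToMixture (range M \ {1}) q ≤ divToMixture (range M \ {0}) q}

lemma isCompact_feasibleSet (M : ℕ) : IsCompact (feasibleSet 𝓨 M) := by
  have hS : IsCompact (Set.univ.pi fun _ : ℕ => stdSimplex ℝ 𝓨) :=
    isCompact_univ_pi fun _ => isCompact_stdSimplex ℝ 𝓨
  have hnonneg : ∀ A : Finset ℕ, (Set.univ.pi fun _ : ℕ => stdSimplex ℝ 𝓨) ⊆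
      {q | ∀ j ∈ A, ∀ y, 0 ≤ q j y} :=
    fun _ q hq j _ y => (hq j (Set.mem_univ j)).1 y
  exact hS.of_isClosed_subset (hS.isClosed.isClosed_le
    ((continuousOn_divToMixture _).mono (hnonneg _))
    ((continuousOn_divToMixture _).mono (hnonneg _))) (Set.sep_subset _ _)

lemma const_mem_feasibleSet {p : 𝓨 → ℝ} (hp : IsProb p) : (fun _ => p) ∈ feasibleSet 𝓨 M := by
  refine ⟨fun _ _ => hp, ?_⟩
  rw [divToMixture_of_forall_eq fun _ _ => rfl, divToMixture_of_forall_eq fun _ _ => rfl]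

lemma VstarSet_eq_image (hM : 2 ≤ M) (hπ : IsProb π) :
    VstarSet μ π M = objective μ π M '' feasibleSet 𝓨 M := by
  ext x
  rw [mem_VstarSet_iff hM]
  constructor
  · rintro ⟨q, hq, hcon, rfl⟩
    -- `VstarSet` leaves the entries `q j`, `j ≥ M`, free; pinning them to `π` changes nothing.
    set q' : ℕ → 𝓨 → ℝ := fun j => if j < M then q j else π
    have hq' : ∀ j < M, q' j = q j := fun j hj => if_pos hj
    have hq'A : ∀ i, ∀ j ∈ range M \ {i}, q' j = q j := fun i j hj =>
      hq' j (mem_range.1 (sdiff_subset hj))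
    refine ⟨q', ⟨fun j _ => ?_, ?_⟩, ?_⟩
    · by_cases hj : j < M
      · rw [hq' j hj]; exact hq j hj
      · simp only [q', if_neg hj]; exact hπ
    · rwa [divToMixture_congr (hq'A 0), divToMixture_congr (hq'A 1)]
    · rw [objective, objective, hq' 0 (by omega), sum_congr rfl fun j hj => by rw [hq'A 0 j hj]]
  · rintro ⟨q, ⟨hq, hcon⟩, rfl⟩
    exact ⟨q, fun j _ => hq j (Set.mem_univ j), hcon, rfl⟩

lemma exists_isLeast_VstarSet (hM : 2 ≤ M) (hπ : IsProb π) (hμf : FullSupport μ)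
    (hπf : FullSupport π) : ∃ V, IsLeast (VstarSet μ π M) V := by
  rw [VstarSet_eq_image hM hπ]
  exact ((isCompact_feasibleSet M).image (continuous_objective (fun y => (hμf y).ne')
    fun y => (hπf y).ne')).exists_isLeast ⟨_, Set.mem_image_of_mem _ (const_mem_feasibleSet hπ)⟩

lemma pos_of_mem_VstarSet (hM : 3 ≤ M) (hμ : IsProb μ) (hπ : IsProb π) (hμf : FullSupport μ)
    (hπf : FullSupport π) (hne : μ ≠ π) {x : ℝ} (hx : x ∈ VstarSet μ π M) : 0 < x := by
  obtain ⟨q, hq, hcon, rfl⟩ := (mem_VstarSet_iff (by omega)).1 hx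
  have hqA : ∀ i, ∀ j ∈ range M \ {i}, IsProb (q j) := fun i j hj =>
    hq j (mem_range.1 (sdiff_subset hj))
  have h0 : 0 ≤ KL (q 0) μ := KL_nonneg (hq 0 (by omega)) hμ hμf
  have hA0 : ∀ j ∈ range M \ {0}, 0 ≤ KL (q j) π := fun j hj => KL_nonneg (hqA 0 j hj) hπ hπf
  refine (add_nonneg h0 (sum_nonneg hA0)).lt_of_ne fun hzero => ?_
  obtain ⟨hq0, hqA0⟩ := (add_eq_zero_iff_of_nonneg h0 (sum_nonneg hA0)).1 hzero.symm
  replace hq0 : q 0 = μ := eq_of_KL_eq_zero (hq 0 (by omega)) hμ hμf hq0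
  replace hqA0 : ∀ j ∈ range M \ {0}, q j = π := fun j hj =>
    eq_of_KL_eq_zero (hqA 0 j hj) hπ hπf ((sum_eq_zero_iff_of_nonneg hA0).1 hqA0 j hj)
  have hmem : ∀ i j : ℕ, i < M → i ≠ j → i ∈ range M \ {j} := fun i j hi hij => by
    simpa [hi] using hij
  have h01 : 0 ∈ range M \ {1} := hmem 0 1 (by omega) zero_ne_one
  have hq2 : q 2 = π := hqA0 2 (hmem 2 0 (by omega) (by omega))
  have hpos : 0 < divToMixture (range M \ {1}) q :=
    divToMixture_pos (hqA 1) h01 (hq0 ▸ hμf) h01 (hmem 2 1 (by omega) (by omega))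
      (by rwa [hq0, hq2])
  rw [divToMixture_of_forall_eq hqA0] at hcon
  linarith

end Vstar

theorem statement9_general (𝓨 : Type) [Fintype 𝓨]
    (M : ℕ) (hM : 3 ≤ M)
    (μ π : 𝓨 → ℝ) (hμ : IsProb μ) (hπ : IsProb π)
    (hμf : FullSupport μ) (hπf : FullSupport π) (hne : μ ≠ π) :
    ∃ V : ℝ, IsLeast (VstarSet μ π M) V ∧ 0 < V := by
  obtain ⟨V, hV⟩ := exists_isLeast_VstarSet (M := M) (by omega) hπ hμf hπf
  exact ⟨V, hV, pos_of_mem_VstarSet hM hμ hπ hμf hπf hne hV.1⟩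

/-- universal exponential consistency in Theorem 2.
For every `M ≥ 3` and full-support `μ ≠ π`, the minimum `V*(M)` of the
optimization problem in Theorem 2 is strictly positive. -/
theorem statement9 (𝓨 : Type) [Fintype 𝓨] [Nonempty 𝓨]
    (M : ℕ) (hM : 3 ≤ M)
    (μ π : 𝓨 → ℝ) (hμ : IsProb μ) (hπ : IsProb π)
    (hμf : FullSupport μ) (hπf : FullSupport π) (hne : μ ≠ π) :
    ∃ V : ℝ, IsLeast (VstarSet μ π M) V ∧ 0 < V :=
  statement9_general 𝓨 M hM μ π hμ hπ hμf hπf hne
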